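/- Let M be an admissible matroid on J of rank d + 1, S = S(M) the associated ranked symplectic matroid, and c a Minkowski weight of dimension d on the Bergman fan of S. If σ₁ = (F₁ ⊊ … ⊊ F_d) and σ₂ = (G₁ ⊊ … ⊊ G_d) are maximal chains of L(S) ∖ {∅, J} with F_{d−1} = G_{d−1} and F_d ∩ (G_d)* ≠ ∅, then c(σ₁) = c(σ₂). -/

import Mathlib

open Set Matroid
open scoped Matroid

open scoped Classical

/-- The ground set `J = [n] ⊔ [n]*`: `Sum.inl` is `[n]`, `Sum.inr` is `[n]*`. -/
abbrev J (n : ℕ) := Fin n ⊕ Fin n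

/-- The fixed-point-free involution `a ↦ a*` on `J n`. -/
def sstar {n : ℕ} (a : J n) : J n := Sum.swap a

/-- `A* = {a* : a ∈ A}`. -/
def starSet {n : ℕ} (A : Set (J n)) : Set (J n) := sstar '' A

/-- `A` is admissible if `A ∩ A* = ∅`. -/
def Admissible {n : ℕ} (A : Set (J n)) : Prop := A ∩ starSet A = ∅

/-- `A` is totally inadmissible if `A* = A`. -/
def TotallyInadmissible {n : ℕ} (A : Set (J n)) : Prop := starSet A = A

/-- The rank of a set in a matroid (on a finite ground type). -/
noncomputable def Matroid.rSet {α : Type*} (M : Matroid α) (A : Set α) : ℕ :=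
  sSup {k : ℕ | ∃ I, M.Indep I ∧ I ⊆ A ∧ I.ncard = k}

/-- The rank of a matroid. -/
noncomputable def Matroid.rnk {α : Type*} (M : Matroid α) : ℕ := M.rSet M.E

/-- A loopless matroid: every singleton of the ground set is independent. -/
def Matroid.LooplessM {α : Type*} (M : Matroid α) : Prop := ∀ a ∈ M.E, M.Indep {a}

/-- `I^ad M`: the independent sets of `M` whose closure is admissible. -/
def Iad {n : ℕ} (M : Matroid (J n)) : Set (Set (J n)) :=
  {I | M.Indep I ∧ Admissible (M.closure I)}

/-- An admissible matroid on `J n`. -/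
def IsAdmissibleMatroid {n : ℕ} (M : Matroid (J n)) : Prop :=
  M.E = Set.univ ∧ M.LooplessM ∧
    ∀ A : Set (J n),
      M.rSet A = sSup {v : ℕ | ∃ I : Set (J n), M.Indep I ∧ Admissible I ∧ I ⊆ A ∧
        v = if ∃ a, a ∈ A ∧ sstar a ∈ A ∧ (I ∪ {a}) ∈ Iad M ∧ (I ∪ {sstar a}) ∈ Iad M
            then I.ncard + 2 else I.ncard}

/-- Strongly admissible sets with respect to `M`. -/
inductive StronglyAdmissible {n : ℕ} (M : Matroid (J n)) : Set (J n) → Prop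
  | empty : StronglyAdmissible M ∅
  | insert {B : Set (J n)} {a : J n} : StronglyAdmissible M B →
      a ∉ M.closure B → sstar a ∉ M.closure B → StronglyAdmissible M (Insert.insert a B)

/-- The Möbius function of a finite poset, valued in `ℤ`. -/
noncomputable def mob {α : Type*} [PartialOrder α] [Fintype α] (x y : α) : ℤ :=
  letI : DecidableEq α := Classical.decEq α
  letI : @DecidableRel α α (· < ·) := Classical.decRel _
  letI : @DecidableRel α α (· ≤ ·) := Classical.decRel _
  letI := Fintype.toLocallyFiniteOrder (α := α)
  IncidenceAlgebra.mu ℤ x y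

/-- The lattice of flats of the ranked symplectic matroid associated to `M`:
admissible flats of `M` together with the ground set as top element. -/
abbrev LS {n : ℕ} (M : Matroid (J n)) :=
  {F : Set (J n) // (M.IsFlat F ∧ Admissible F) ∨ F = M.E}

/-- The Möbius number `μ(S(M))` of the lattice of flats of the ranked symplectic matroid. -/
noncomputable def muS {n : ℕ} (M : Matroid (J n)) : ℤ :=
  if h : M.IsFlat ∅ ∧ Admissible (∅ : Set (J n)) then
    mob (⟨∅, Or.inl h⟩ : LS M) ⟨M.E, Or.inr rfl⟩
  else 0

/-- The Möbius function of the lattice of flats of `M`. -/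
noncomputable def muFlats {n : ℕ} (M : Matroid (J n)) (F G : Set (J n)) : ℤ :=
  if h : M.IsFlat F ∧ M.IsFlat G then
    mob (⟨F, h.1⟩ : {X : Set (J n) // M.IsFlat X}) ⟨G, h.2⟩
  else 0

/-- Matroid deletion. -/
def Matroid.del {α : Type*} (M : Matroid α) (D : Set α) : Matroid α := M ↾ (M.E \ D)

/-- Matroid contraction, via the dual. -/
def Matroid.con {α : Type*} (M : Matroid α) (C : Set α) : Matroid α := (M✶ ↾ (M✶.E \ C))✶

/-- A circuit: a minimal dependent subset of the ground set. -/
def Matroid.Circuit' {α : Type*} (M : Matroid α) (C : Set α) : Prop :=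
  C ⊆ M.E ∧ ¬ M.Indep C ∧ ∀ D, D ⊂ C → M.Indep D

/-- Connectedness of a matroid: nonempty ground set and any two elements lie
in a common circuit. -/
def Matroid.ConnectedM {α : Type*} (M : Matroid α) : Prop :=
  M.E.Nonempty ∧ ∀ a ∈ M.E, ∀ b ∈ M.E, a = b ∨ ∃ C, M.Circuit' C ∧ a ∈ C ∧ b ∈ C

/-- The 0/1-indicator vector of `B ⊆ J` in `ℝ^J`. -/
noncomputable def indic {n : ℕ} (B : Set (J n)) : J n → ℝ := fun a => if a ∈ B then 1 else 0

/-- The enveloping map `env : ℝ^J → ℝ^n`, `(env x)_i = x_i - x_{i*}`. -/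
def envMap {n : ℕ} (x : J n → ℝ) : Fin n → ℝ := fun i => x (Sum.inl i) - x (Sum.inr i)

/-- `e±_A ∈ ℝ^n`: `+1` on coordinates `i ∈ A`, `-1` on coordinates with `i* ∈ A`, `0` otherwise. -/
noncomputable def epm {n : ℕ} (A : Set (J n)) : Fin n → ℝ := envMap (indic A)

/-- The matroid polytope `P(S(M))` of the ranked symplectic matroid of `M`. -/
noncomputable def PolyS {n : ℕ} (M : Matroid (J n)) : Set (Fin n → ℝ) :=
  convexHull ℝ (epm '' {B | M.IsBase B ∧ Admissible B})

/-- The support of the Bergman fan of the ranked symplectic matroid of `M`. -/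
def Berg {n : ℕ} (M : Matroid (J n)) : Set (Fin n → ℝ) :=
  {ω | ∃ C : Finset (Set (J n)),
    (∀ F ∈ C, M.IsFlat F ∧ Admissible F ∧ F ≠ ∅) ∧
    (∀ F ∈ C, ∀ G ∈ C, F ⊆ G ∨ G ⊆ F) ∧
    ∃ a : Set (J n) → ℝ, (∀ F, 0 ≤ a F) ∧ ω = ∑ F ∈ C, a F • epm F}

/-- A maximal chain `F₁ ⊊ ⋯ ⊊ F_d` of proper flats of the lattice of flats of `S(M)`,
where `rank_M (F i) = i + 1`. -/
def IsFlagChain {n : ℕ} (M : Matroid (J n)) (d : ℕ) (F : Fin d → Set (J n)) : Prop :=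
  (∀ i, M.IsFlat (F i) ∧ Admissible (F i) ∧ M.rSet (F i) = (i : ℕ) + 1) ∧
    ∀ i j : Fin d, i < j → F i ⊂ F j

/-- A Minkowski weight of dimension `d` on the Bergman fan of `S(M)`. -/
def IsMinkowskiWeight {n : ℕ} (M : Matroid (J n)) (d : ℕ)
    (c : (Fin d → Set (J n)) → ℤ) : Prop :=
  ∀ (σ : Fin d → Set (J n)) (k : Fin d), IsFlagChain M d σ →
    (∑ G ∈ Finset.univ.filter
        (fun G : Set (J n) => IsFlagChain M d (Function.update σ k G)),
        (c (Function.update σ k G) : ℝ) • epm G)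
      ∈ Submodule.span ℝ {v : Fin n → ℝ | ∃ i : Fin d, i ≠ k ∧ v = epm (σ i)}

/-- The top (rank `d`) flat of a maximal chain. -/
def chainTop {n d : ℕ} (σ : Fin d → Set (J n)) : Set (J n) := ⋃ i, σ i

/-!
For a maximal chain `σ` and a position `k`, every flag `G` that can replace `σ k` contains the
same corank-one flat `L`, so a point outside `L` lies in exactly one such `G`. Applying to the
balancing condition at `k` a functional that vanishes on the `e±` of the other flags of `σ` and
takes the value `1` on one candidate `G₁`, `-1` on another `G₂` and `0` on all remaining ones
shows `c(σ[k ↦ G₁]) = c(σ[k ↦ G₂])`. Such functionals are built from `φ_a` (`epmCoord a`), the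
functional with `φ_a(e±_B) = [a ∈ B] - [a* ∈ B]`.

At the top, `a ∈ F_d` with `a* ∈ G_d` makes `φ_a` separate `F_d` from `G_d`; as `F_{d-1} = G_{d-1}`,
replacing `F_d` by `G_d` in `σ₁` yields a maximal chain, of the same weight. Below the top,
`φ_a - φ_b` for `a ∈ σ k`, `b ∈ G` off `L` shows that replacing one non-top flag never changes
the weight, and any two maximal chains with the same top flag are connected by such replacements.
-/

namespace Matroid

variable {α : Type*} {M : Matroid α} {X Z F G I L : Set α} {e x : α}

lemma ssubset_of_rSet_lt (hFG : F ⊆ G) (hr : M.rSet F < M.rSet G) : F ⊂ G :=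
  hFG.ssubset_of_ne <| by rintro rfl; exact hr.false

lemma IsFlat.inter (hF : M.IsFlat F) (hG : M.IsFlat G) : M.IsFlat (F ∩ G) := by
  rw [Set.inter_eq_iInter]
  exact IsFlat.iInter (Bool.forall_bool.2 ⟨hG, hF⟩)

variable [Finite α]

lemma IsBasis'.rSet_eq_ncard (hI : M.IsBasis' I X) : M.rSet X = I.ncard := by
  have hle : ∀ k ∈ {k : ℕ | ∃ K, M.Indep K ∧ K ⊆ X ∧ K.ncard = k}, k ≤ I.ncard := by
    rintro k ⟨K, hK, hKX, rfl⟩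
    have h := (hK.encard_le_eRk_of_subset hKX).trans hI.encard_eq_eRk.ge
    rwa [← (toFinite K).cast_ncard_eq, ← (toFinite I).cast_ncard_eq, Nat.cast_le] at h
  exact le_antisymm (csSup_le ⟨_, I, hI.indep, hI.subset, rfl⟩ hle)
    (le_csSup ⟨_, hle⟩ ⟨I, hI.indep, hI.subset, rfl⟩)

lemma cast_rSet (M : Matroid α) (X : Set α) : (M.rSet X : ℕ∞) = M.eRk X := by
  obtain ⟨I, hI⟩ := M.exists_isBasis' X
  rw [hI.rSet_eq_ncard, (toFinite I).cast_ncard_eq, hI.encard_eq_eRk]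

lemma Indep.rSet_eq_ncard (hI : M.Indep I) : M.rSet I = I.ncard :=
  hI.isBasis_self.isBasis'.rSet_eq_ncard

lemma rSet_closure (M : Matroid α) (X : Set α) : M.rSet (M.closure X) = M.rSet X := by
  rw [← Nat.cast_inj (R := ℕ∞), cast_rSet, cast_rSet, eRk_closure_eq]

lemma rSet_loops (M : Matroid α) : M.rSet M.loops = 0 := by
  rw [← Nat.cast_inj (R := ℕ∞), cast_rSet, eRk_loops, Nat.cast_zero]

lemma rSet_closure_insert (hZ : M.IsFlat Z) (he : e ∈ M.E) (heZ : e ∉ Z) :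
    M.rSet (M.closure (insert e Z)) = M.rSet Z + 1 := by
  rw [← Nat.cast_inj (R := ℕ∞), Nat.cast_add, cast_rSet, cast_rSet, eRk_closure_eq,
    eRk_insert_eq_add_one ⟨he, by rwa [hZ.closure]⟩, Nat.cast_one]

lemma IsFlat.eq_of_subset_of_rSet_le (hF : M.IsFlat F) (hG : M.IsFlat G) (hFG : F ⊆ G)
    (hr : M.rSet G ≤ M.rSet F) : F = G := by
  rw [← hF.closure, ← hG.closure]
  refine (M.isRkFinite_of_finite (toFinite F)).closure_eq_closure_of_subset_of_eRk_ge_eRk hFG ?_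
  rw [← cast_rSet, ← cast_rSet]
  exact_mod_cast hr

lemma IsFlat.rSet_lt_of_ssubset (hF : M.IsFlat F) (hG : M.IsFlat G) (hFG : F ⊂ G) :
    M.rSet F < M.rSet G :=
  lt_of_not_ge fun h ↦ hFG.ne (hF.eq_of_subset_of_rSet_le hG hFG.subset h)

lemma IsFlat.closure_insert_eq (hL : M.IsFlat L) (hG : M.IsFlat G) (hLG : L ⊆ G)
    (hr : M.rSet G = M.rSet L + 1) (hx : x ∈ G) (hxL : x ∉ L) :
    M.closure (insert x L) = G := by
  refine (M.isFlat_closure _).eq_of_subset_of_rSet_le hG ?_ ?_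
  · exact (M.closure_subset_closure (Set.insert_subset hx hLG)).trans hG.closure.subset
  · rw [rSet_closure_insert hL (hG.subset_ground hx) hxL, hr]

lemma IsFlat.exists_isFlat_between (hF : M.IsFlat F) (hG : M.IsFlat G) (hFG : F ⊆ G) {m : ℕ}
    (h₁ : M.rSet F ≤ m) (h₂ : m ≤ M.rSet G) :
    ∃ Z, M.IsFlat Z ∧ F ⊆ Z ∧ Z ⊆ G ∧ M.rSet Z = m := by
  obtain ⟨I, hI⟩ := M.exists_isBasis F hF.subset_ground
  obtain ⟨K, hK, hIK⟩ := hI.indep.subset_isBasis_of_subset (hI.subset.trans hFG) hG.subset_ground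
  rw [hI.isBasis'.rSet_eq_ncard] at h₁
  rw [hK.isBasis'.rSet_eq_ncard] at h₂
  obtain ⟨B, hIB, hBK, hB⟩ := Set.exists_subsuperset_card_eq hIK h₁ h₂
  refine ⟨M.closure B, M.isFlat_closure B, ?_, ?_, ?_⟩
  · rw [← hF.closure, ← hI.closure_eq_closure]
    exact M.closure_subset_closure hIB
  · rw [← hG.closure, ← hK.closure_eq_closure]
    exact M.closure_subset_closure hBK
  · rw [rSet_closure, (hK.indep.subset hBK).rSet_eq_ncard, hB]

lemma IsFlat.exists_monotone_flats (hZ : M.IsFlat Z) :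
    ∃ g : ℕ → Set α, Monotone g ∧ (∀ i, M.IsFlat (g i) ∧ g i ⊆ Z) ∧
      ∀ i ≤ M.rSet Z, M.rSet (g i) = i := by
  induction h : M.rSet Z generalizing Z with
  | zero =>
    exact ⟨fun _ ↦ Z, monotone_const, fun _ ↦ ⟨hZ, subset_rfl⟩, fun i hi ↦ by simp only [h]; omega⟩
  | succ m ih =>
    obtain ⟨Y, hY, -, hYZ, hYr⟩ := M.isFlat_closure ∅ |>.exists_isFlat_between hZ
      hZ.loops_subset (m := m) (by rw [closure_empty, rSet_loops]; exact m.zero_le) (by omega)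
    obtain ⟨g, hg, hgY, hgr⟩ := ih hY hYr
    refine ⟨fun i ↦ if m < i then Z else g i, ?_, ?_, ?_⟩
    · intro i i' hii'
      dsimp only
      split_ifs with h h' h'
      · exact subset_rfl
      · omega
      · exact (hgY i).2.trans hYZ
      · exact hg hii'
    · intro i
      dsimp only
      split_ifs
      · exact ⟨hZ, subset_rfl⟩
      · exact ⟨(hgY i).1, (hgY i).2.trans hYZ⟩
    · intro i hi
      dsimp only
      split_ifs with h
      · omega
      · exact hgr i (by omega)

end Matroid

section Involution

variable {n : ℕ} {A B : Set (J n)} {a : J n}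

@[simp] lemma sstar_sstar (a : J n) : sstar (sstar a) = a := Sum.swap_swap a

lemma mem_starSet_iff : a ∈ starSet A ↔ sstar a ∈ A := by
  refine ⟨?_, fun h ↦ ⟨sstar a, h, sstar_sstar a⟩⟩
  rintro ⟨b, hb, rfl⟩
  rwa [sstar_sstar]

lemma Admissible.sstar_notMem (hB : Admissible B) (ha : a ∈ B) : sstar a ∉ B := fun ha' ↦
  (Set.eq_empty_iff_forall_notMem.1 hB) a ⟨ha, mem_starSet_iff.2 ha'⟩

lemma Admissible.subset (hB : Admissible B) (hAB : A ⊆ B) : Admissible A :=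
  Set.eq_empty_iff_forall_notMem.2 fun _ ⟨ha, ha'⟩ ↦
    hB.sstar_notMem (hAB ha) (hAB (mem_starSet_iff.1 ha'))

lemma indic_eq_zero (ha : a ∉ A) : indic A a = 0 := if_neg ha

lemma indic_eq_one (ha : a ∈ A) : indic A a = 1 := if_pos ha

lemma indic_eq_ite_of_unique {W : Set (J n)} (haW : a ∈ W) (h : a ∈ B → B = W) :
    indic B a = if B = W then 1 else 0 := by
  by_cases hBW : B = W
  · rw [if_pos hBW, hBW, indic_eq_one haW]
  · rw [if_neg hBW, indic_eq_zero (mt h hBW)]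

lemma Admissible.indic_sstar (hB : Admissible B) (ha : a ∈ B) (hAB : A ⊆ B) :
    indic A (sstar a) = 0 :=
  indic_eq_zero fun h ↦ hB.sstar_notMem ha (hAB h)

end Involution

section Functional

variable {n : ℕ}

noncomputable def epmCoord : J n → (Fin n → ℝ) →ₗ[ℝ] ℝ
  | .inl i => LinearMap.proj i
  | .inr i => -LinearMap.proj i

lemma epmCoord_epm (a : J n) (B : Set (J n)) :
    epmCoord a (epm B) = indic B a - indic B (sstar a) := by
  cases a with
  | inl i => rfl
  | inr i => simp [epmCoord, epm, envMap, sstar]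

end Functional

section FlagChain

variable {n d : ℕ} {M : Matroid (J n)} {σ : Fin d → Set (J n)} {G : Set (J n)} {k : Fin d}

namespace IsFlagChain

lemma isFlat (hσ : IsFlagChain M d σ) (i : Fin d) : M.IsFlat (σ i) := (hσ.1 i).1

lemma admissible (hσ : IsFlagChain M d σ) (i : Fin d) : Admissible (σ i) := (hσ.1 i).2.1

lemma rSet_eq (hσ : IsFlagChain M d σ) (i : Fin d) : M.rSet (σ i) = i + 1 := (hσ.1 i).2.2

lemma monotone (hσ : IsFlagChain M d σ) : Monotone σ := fun i j hij ↦
  hij.eq_or_lt.elim (fun h ↦ h ▸ subset_rfl) fun h ↦ (hσ.2 i j h).subset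

lemma of_monotone (hσ : ∀ i, M.IsFlat (σ i) ∧ Admissible (σ i) ∧ M.rSet (σ i) = i + 1)
    (hmono : Monotone σ) : IsFlagChain M d σ :=
  ⟨hσ, fun i j hij ↦ ssubset_of_rSet_lt (hmono hij.le) (by
    rw [(hσ i).2.2, (hσ j).2.2]
    exact Nat.add_lt_add_right hij 1)⟩

lemma update_iff (hσ : IsFlagChain M d σ) :
    IsFlagChain M d (Function.update σ k G) ↔ M.IsFlat G ∧ Admissible G ∧
      M.rSet G = k + 1 ∧ (∀ i < k, σ i ⊆ G) ∧ ∀ i, k < i → G ⊆ σ i := by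
  constructor
  · intro h
    obtain ⟨hG, hGa, hGr⟩ := by simpa using h.1 k
    refine ⟨hG, hGa, hGr, fun i hi ↦ ?_, fun i hi ↦ ?_⟩
    · simpa [hi.ne] using (h.2 _ _ hi).subset
    · simpa [hi.ne'] using (h.2 _ _ hi).subset
  · rintro ⟨hG, hGa, hGr, hbelow, habove⟩
    refine of_monotone (fun i ↦ ?_) fun i j hij ↦ ?_
    · rcases eq_or_ne i k with rfl | hi
      · simpa using ⟨hG, hGa, hGr⟩
      · simpa [hi] using hσ.1 i
    · simp only [Function.update_apply]
      split_ifs with hi hj hj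
      · exact subset_rfl
      · exact habove j (hi ▸ lt_of_le_of_ne hij (Ne.symm (hi ▸ hj)))
      · exact hbelow i (hj ▸ lt_of_le_of_ne hij (hj ▸ hi))
      · exact hσ.monotone hij

/-- `L` is the previous flag of `σ`, or the loops when `k = 0`; it has corank one in every `G`
completing `σ` at `k`, so `G` is the closure of `L` and any of its points outside `L`. -/
lemma exists_floor (hσ : IsFlagChain M d σ) (k : Fin d) :
    ∃ L, (∀ i < k, σ i ⊆ L) ∧ (∀ G, IsFlagChain M d (Function.update σ k G) → L ⊂ G) ∧
      ∀ G W x, IsFlagChain M d (Function.update σ k G) →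
        IsFlagChain M d (Function.update σ k W) → x ∈ G → x ∈ W → x ∉ L → G = W := by
  obtain ⟨L, hL, hLr, hσL, hLG⟩ : ∃ L, M.IsFlat L ∧ M.rSet L = k ∧ (∀ i < k, σ i ⊆ L) ∧
      ∀ G, IsFlagChain M d (Function.update σ k G) → L ⊆ G := by
    rcases k with ⟨_ | p, hk⟩
    · exact ⟨M.loops, M.isFlat_closure ∅, M.rSet_loops,
        fun i hi ↦ absurd (Fin.lt_def.1 hi) (Nat.not_lt_zero _),
        fun G hG ↦ ((hσ.update_iff).1 hG).1.loops_subset⟩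
    · refine ⟨σ ⟨p, by omega⟩, hσ.isFlat _, hσ.rSet_eq _, fun i hi ↦ hσ.monotone ?_,
        fun G hG ↦ ((hσ.update_iff).1 hG).2.2.2.1 _ (Fin.mk_lt_mk.2 p.lt_succ_self)⟩
      exact Fin.le_def.2 (Nat.le_of_lt_succ hi)
  refine ⟨L, hσL, fun G hG ↦ ssubset_of_rSet_lt (M := M) (hLG G hG) ?_,
    fun G W x hG hW hxG hxW hxL ↦ ?_⟩
  · rw [((hσ.update_iff).1 hG).2.2.1, hLr]
    exact Nat.lt_succ_self _
  · obtain ⟨hGf, -, hGr, -⟩ := (hσ.update_iff).1 hG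
    obtain ⟨hWf, -, hWr, -⟩ := (hσ.update_iff).1 hW
    rw [← hL.closure_insert_eq hGf (hLG G hG) (by rw [hGr, hLr]) hxG hxL,
      hL.closure_insert_eq hWf (hLG W hW) (by rw [hWr, hLr]) hxW hxL]

end IsFlagChain

end FlagChain

section MinkowskiWeight

variable {n d : ℕ} {M : Matroid (J n)} {σ : Fin d → Set (J n)} {G : Set (J n)} {k : Fin d}
  {c : (Fin d → Set (J n)) → ℤ}

lemma IsMinkowskiWeight.eq_of_separating (hc : IsMinkowskiWeight M d c)
    (hσ : IsFlagChain M d σ) (ψ : (Fin n → ℝ) →ₗ[ℝ] ℝ) (hψσ : ∀ i ≠ k, ψ (epm (σ i)) = 0)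
    {G₁ G₂ : Set (J n)} (h₁ : IsFlagChain M d (Function.update σ k G₁))
    (h₂ : IsFlagChain M d (Function.update σ k G₂))
    (hψ : ∀ G, IsFlagChain M d (Function.update σ k G) →
      ψ (epm G) = (if G = G₁ then 1 else 0) - (if G = G₂ then 1 else 0)) :
    c (Function.update σ k G₁) = c (Function.update σ k G₂) := by
  set s := Finset.univ.filter fun G ↦ IsFlagChain M d (Function.update σ k G)
  have hker : ψ (∑ G ∈ s, (c (Function.update σ k G) : ℝ) • epm G) = 0 := by
    refine (Submodule.span_le (p := LinearMap.ker ψ)).2 ?_ (hc σ k hσ)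
    rintro _ ⟨i, hi, rfl⟩
    exact hψσ i hi
  have hterm : ∀ G ∈ s, ψ ((c (Function.update σ k G) : ℝ) • epm G) =
      (if G = G₁ then (c (Function.update σ k G) : ℝ) else 0) -
        (if G = G₂ then (c (Function.update σ k G) : ℝ) else 0) := fun G hG ↦ by
    rw [map_smul, hψ G (Finset.mem_filter.1 hG).2, smul_eq_mul]
    split_ifs <;> ring
  rw [map_sum, Finset.sum_congr rfl hterm, Finset.sum_sub_distrib, Finset.sum_ite_eq',
    Finset.sum_ite_eq', if_pos (by simpa [s] using h₁), if_pos (by simpa [s] using h₂),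
    sub_eq_zero] at hker
  exact_mod_cast hker

/-- Here `φ_a - φ_b` separates `σ k` from `G`: `a*` and `b*` lie in no flag involved, since
`σ (k + 1)` and the flags above it are admissible and contain `a` and `b`. -/
lemma IsMinkowskiWeight.eq_update_of_lt (hc : IsMinkowskiWeight M d c)
    (hσ : IsFlagChain M d σ) (hk : (k : ℕ) + 1 < d)
    (hG : IsFlagChain M d (Function.update σ k G)) : c σ = c (Function.update σ k G) := by
  set k₁ : Fin d := ⟨k + 1, hk⟩
  have hkk₁ : k < k₁ := Fin.lt_def.2 (Nat.lt_succ_self _)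
  have hself : IsFlagChain M d (Function.update σ k (σ k)) := by rwa [Function.update_eq_self]
  have habove : ∀ G, IsFlagChain M d (Function.update σ k G) → G ⊆ σ k₁ := fun G hG ↦
    ((hσ.update_iff).1 hG).2.2.2.2 k₁ hkk₁
  obtain ⟨L, hσL, hLG, huniq⟩ := hσ.exists_floor k
  obtain ⟨a, ha, haL⟩ := Set.exists_of_ssubset (hLG _ hself)
  obtain ⟨b, hb, hbL⟩ := Set.exists_of_ssubset (hLG G hG)
  have hak₁ := habove _ hself ha
  have hbk₁ := habove G hG hb
  have h := hc.eq_of_separating hσ (epmCoord a - epmCoord b) (fun i hik ↦ ?_) hself hG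
    (fun G' hG' ↦ ?_)
  · rwa [Function.update_eq_self] at h
  · obtain ⟨U, hU, hiU, haU, hbU⟩ : ∃ U, Admissible U ∧ σ i ⊆ U ∧ a ∈ U ∧ b ∈ U := by
      rcases le_total i k₁ with h | h
      · exact ⟨σ k₁, hσ.admissible k₁, hσ.monotone h, hak₁, hbk₁⟩
      · exact ⟨σ i, hσ.admissible i, subset_rfl, hσ.monotone h hak₁, hσ.monotone h hbk₁⟩
    have hab : indic (σ i) a = indic (σ i) b := by
      rcases hik.lt_or_gt with h | h
      · rw [indic_eq_zero fun h' ↦ haL (hσL i h h'), indic_eq_zero fun h' ↦ hbL (hσL i h h')]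
      · have hk₁i : k₁ ≤ i := Fin.le_def.2 h
        rw [indic_eq_one (hσ.monotone hk₁i hak₁), indic_eq_one (hσ.monotone hk₁i hbk₁)]
    simp only [LinearMap.sub_apply, epmCoord_epm, hab, hU.indic_sstar haU hiU,
      hU.indic_sstar hbU hiU, sub_self]
  · have hU := hσ.admissible k₁
    rw [LinearMap.sub_apply, epmCoord_epm, epmCoord_epm,
      indic_eq_ite_of_unique ha fun h ↦ huniq _ _ a hG' hself h ha haL,
      indic_eq_ite_of_unique hb fun h ↦ huniq _ _ b hG' hG h hb hbL,
      hU.indic_sstar hak₁ (habove G' hG'), hU.indic_sstar hbk₁ (habove G' hG')]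
    ring

lemma IsMinkowskiWeight.eq_update_last {e : ℕ} {σ : Fin (e + 1) → Set (J n)}
    {c : (Fin (e + 1) → Set (J n)) → ℤ} (hc : IsMinkowskiWeight M (e + 1) c)
    (hσ : IsFlagChain M (e + 1) σ) (hG : IsFlagChain M (e + 1) (Function.update σ (Fin.last e) G))
    {a : J n} (ha : a ∈ σ (Fin.last e)) (ha' : sstar a ∈ G) :
    c σ = c (Function.update σ (Fin.last e) G) := by
  have hself : IsFlagChain M (e + 1) (Function.update σ (Fin.last e) (σ (Fin.last e))) := by
    rwa [Function.update_eq_self]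
  obtain ⟨-, hGa, -, hbelow, -⟩ := (hσ.update_iff).1 hG
  have htop := hσ.admissible (Fin.last e)
  obtain ⟨L, -, hLG, huniq⟩ := hσ.exists_floor (Fin.last e)
  have haL : a ∉ L := fun h ↦ hGa.sstar_notMem ((hLG G hG).subset h) ha'
  have haL' : sstar a ∉ L := fun h ↦ htop.sstar_notMem ha ((hLG _ hself).subset h)
  have h := hc.eq_of_separating hσ (epmCoord a) (fun i hi ↦ ?_) hself hG (fun G' hG' ↦ ?_)
  · rwa [Function.update_eq_self] at h
  · have hlt : i < Fin.last e := lt_of_le_of_ne (Fin.le_last i) hi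
    rw [epmCoord_epm, htop.indic_sstar ha (hσ.monotone hlt.le),
      indic_eq_zero fun h ↦ hGa.sstar_notMem (hbelow i hlt h) ha', sub_zero]
  · rw [epmCoord_epm, indic_eq_ite_of_unique ha fun h ↦ huniq _ _ a hG' hself h ha haL,
      indic_eq_ite_of_unique ha' fun h ↦ huniq _ _ _ hG' hG h ha' haL']

end MinkowskiWeight

section Gallery

variable {n d : ℕ} {M : Matroid (J n)} {σ σ' : Fin d → Set (J n)} {Z : Set (J n)}

lemma IsFlagChain.exists_refill_below (hσ : IsFlagChain M d σ) (j : Fin d)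
    (hZ : M.IsFlat Z) (hZr : M.rSet Z = j) (hZσ : Z ⊆ σ j) :
    ∃ τ, IsFlagChain M d τ ∧ (∀ i, j ≤ i → τ i = σ i) ∧ ∀ i < j, τ i ⊆ Z := by
  obtain ⟨g, hg, hgZ, hgr⟩ := hZ.exists_monotone_flats
  refine ⟨fun i ↦ if i < j then g (i + 1) else σ i, .of_monotone (fun i ↦ ?_) fun i i' hii' ↦ ?_,
    fun i hi ↦ if_neg (not_lt.2 hi), fun i hi ↦ ?_⟩
  · split_ifs with h
    · exact ⟨(hgZ _).1, (hσ.admissible j).subset ((hgZ _).2.trans hZσ),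
        hgr _ (hZr ▸ Nat.succ_le_of_lt (Fin.lt_def.1 h))⟩
    · exact hσ.1 i
  · split_ifs with h h' h'
    · exact hg (Nat.succ_le_succ hii')
    · exact (hgZ _).2.trans (hZσ.trans (hσ.monotone (not_lt.1 h')))
    · exact absurd (lt_of_le_of_lt hii' h') h
    · exact hσ.monotone hii'
  · simp only [if_pos hi]
    exact (hgZ _).2

/-- `X = cl (Z ∪ {y})` for `y ∈ σ' j \ σ j` and a corank-one flat `Z ⊇ σ j ∩ σ' j` of `σ j`,
below which `σ` is refilled. -/
lemma IsFlagChain.exists_update_closer (hσ : IsFlagChain M d σ) (hσ' : IsFlagChain M d σ')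
    {j : Fin d} (hj : (j : ℕ) + 1 < d) (hag : ∀ i, j < i → σ i = σ' i) (hne : σ j ≠ σ' j) :
    ∃ τ X, IsFlagChain M d τ ∧ (∀ i, j ≤ i → τ i = σ i) ∧
      IsFlagChain M d (Function.update τ j X) ∧ σ' j \ X ⊂ σ' j \ σ j := by
  set j₁ : Fin d := ⟨j + 1, hj⟩
  have hjj₁ : j < j₁ := Fin.lt_def.2 (Nat.lt_succ_self _)
  have hσS : σ j ⊆ σ j₁ := hσ.monotone hjj₁.le
  have hσ'S : σ' j ⊆ σ j₁ := hag j₁ hjj₁ ▸ hσ'.monotone hjj₁.le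
  have heq_of_subset : ∀ {X Y}, IsFlagChain M d X → IsFlagChain M d Y → X j ⊆ Y j → X j = Y j :=
    fun hX hY h ↦ (hX.isFlat j).eq_of_subset_of_rSet_le (hY.isFlat j) h
      (by rw [hX.rSet_eq, hY.rSet_eq])
  obtain ⟨y, hy', hy⟩ := Set.not_subset.1 fun h ↦ hne (heq_of_subset hσ' hσ h).symm
  have hW := (hσ.isFlat j).inter (hσ'.isFlat j)
  have hWr : M.rSet (σ j ∩ σ' j) ≤ j := by
    have := hW.rSet_lt_of_ssubset (hσ.isFlat j) <| Set.inter_subset_left.ssubset_of_ne fun h ↦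
      hne (heq_of_subset hσ hσ' (h ▸ Set.inter_subset_right))
    rw [hσ.rSet_eq] at this
    exact Nat.le_of_lt_succ this
  obtain ⟨Z, hZ, hWZ, hZσ, hZr⟩ := hW.exists_isFlat_between (hσ.isFlat j) Set.inter_subset_left
    hWr (by rw [hσ.rSet_eq]; exact Nat.le_succ _)
  obtain ⟨τ, hτ, hτσ, hτZ⟩ := hσ.exists_refill_below j hZ hZr hZσ
  have hyZ : y ∉ Z := fun h ↦ hy (hZσ h)
  have hXS : M.closure (insert y Z) ⊆ σ j₁ :=
    (M.closure_subset_closure (Set.insert_subset (hσ'S hy') (hZσ.trans hσS))).trans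
      (hσ.isFlat j₁).closure.subset
  have hZX : Z ⊆ M.closure (insert y Z) :=
    (Set.subset_insert y Z).trans (M.subset_closure _ (Set.insert_subset
      ((hσ'.isFlat j).subset_ground hy') hZ.subset_ground))
  have hyX : y ∈ M.closure (insert y Z) := M.mem_closure_of_mem (Set.mem_insert y Z)
    (Set.insert_subset ((hσ'.isFlat j).subset_ground hy') hZ.subset_ground)
  refine ⟨τ, M.closure (insert y Z), hτ, hτσ, (hτ.update_iff).2 ⟨M.isFlat_closure _,
    (hσ.admissible j₁).subset hXS, ?_, fun i hi ↦ (hτZ i hi).trans hZX, fun i hi ↦ ?_⟩, ?_⟩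
  · rw [rSet_closure_insert hZ ((hσ'.isFlat j).subset_ground hy') hyZ, hZr]
  · rw [hτσ i hi.le]
    exact hXS.trans (hσ.monotone (Fin.le_def.2 hi))
  · have hsub : σ' j \ M.closure (insert y Z) ⊆ σ' j \ σ j := fun x hx ↦
      ⟨hx.1, fun hxσ ↦ hx.2 (hZX (hWZ ⟨hxσ, hx.1⟩))⟩
    exact (Set.ssubset_iff_of_subset hsub).2 ⟨y, ⟨hy', hy⟩, fun h ↦ h.2 hyX⟩

lemma IsMinkowskiWeight.eq_of_agree_above {c : (Fin d → Set (J n)) → ℤ}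
    (hc : IsMinkowskiWeight M d c) {j : ℕ} (hj : j < d) (hσ : IsFlagChain M d σ)
    (hσ' : IsFlagChain M d σ') (hag : ∀ i : Fin d, j ≤ i → σ i = σ' i) : c σ = c σ' := by
  induction j generalizing σ σ' with
  | zero => exact congrArg c (funext fun i ↦ hag i (Nat.zero_le _))
  | succ j ih =>
    set k : Fin d := ⟨j, by omega⟩
    suffices h : ∀ m σ, IsFlagChain M d σ → (∀ i : Fin d, j + 1 ≤ i → σ i = σ' i) →
        (σ' k \ σ k).ncard = m → c σ = c σ' from h _ σ hσ hag rfl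
    intro m
    induction m using Nat.strong_induction_on with
    | _ m ihm =>
      intro σ hσ hag hm
      by_cases hne : σ k = σ' k
      · refine ih (by omega) hσ hσ' fun i hi ↦ hi.eq_or_lt.elim (fun h ↦ ?_) (hag i)
        rwa [show i = k from Fin.ext h.symm]
      obtain ⟨τ, X, hτ, hτσ, hτX, hlt⟩ := hσ.exists_update_closer hσ' hj (fun i hi ↦ hag i hi) hne
      calc c σ = c τ := ih (by omega) hσ hτ fun i hi ↦ (hτσ i (Fin.le_def.2 hi)).symm
        _ = c (Function.update τ k X) := hc.eq_update_of_lt hτ hj hτX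
        _ = c σ' := by
          refine ihm _ (hm ▸ Set.ncard_lt_ncard (by rwa [Function.update_self])) _ hτX
            (fun i hi ↦ ?_) rfl
          have hki : k < i := Fin.lt_def.2 hi
          rw [Function.update_of_ne hki.ne', hτσ i hki.le]
          exact hag i hi

end Gallery

theorem stmt_16_general (n : ℕ) (M : Matroid (J n))
    (d : ℕ) (c : (Fin d → Set (J n)) → ℤ)
    (hc : IsMinkowskiWeight M d c)
    (σ₁ σ₂ : Fin d → Set (J n)) (h₁ : IsFlagChain M d σ₁) (h₂ : IsFlagChain M d σ₂)
    (hpen : ∀ i : Fin d, (i : ℕ) + 2 = d → σ₁ i = σ₂ i)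
    (hmeet : ∀ i : Fin d, (i : ℕ) + 1 = d → (σ₁ i ∩ starSet (σ₂ i)).Nonempty) :
    c σ₁ = c σ₂ := by
  rcases d with _ | e
  · exact congrArg c (Subsingleton.elim _ _)
  obtain ⟨a, ha, ha'⟩ := hmeet (Fin.last e) rfl
  have hbelow : ∀ i < Fin.last e, σ₁ i ⊆ σ₂ (Fin.last e) := fun i hi ↦ by
    have hie : (i : ℕ) < e := hi
    set p : Fin (e + 1) := ⟨e - 1, by omega⟩
    calc σ₁ i ⊆ σ₁ p := h₁.monotone (Fin.le_def.2 (show (i : ℕ) ≤ e - 1 by omega))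
      _ = σ₂ p := hpen p (show e - 1 + 2 = e + 1 by omega)
      _ ⊆ σ₂ (Fin.last e) := h₂.monotone (Fin.le_last p)
  have hτ : IsFlagChain M (e + 1) (Function.update σ₁ (Fin.last e) (σ₂ (Fin.last e))) :=
    (h₁.update_iff).2 ⟨h₂.isFlat _, h₂.admissible _, h₂.rSet_eq _, hbelow,
      fun i hi ↦ absurd hi (not_lt.2 (Fin.le_last i))⟩
  calc c σ₁ = c (Function.update σ₁ (Fin.last e) (σ₂ (Fin.last e))) :=
        hc.eq_update_last h₁ hτ ha (mem_starSet_iff.1 ha')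
    _ = c σ₂ := hc.eq_of_agree_above (Nat.lt_succ_self e) hτ h₂ fun i hi ↦ by
        rw [show i = Fin.last e from Fin.ext (le_antisymm (Fin.le_last i) hi), Function.update_self]

theorem stmt_16 (n : ℕ) (hn : 1 ≤ n) (M : Matroid (J n)) (hM : IsAdmissibleMatroid M)
    (d : ℕ) (hrk : M.rnk = d + 1) (c : (Fin d → Set (J n)) → ℤ)
    (hc : IsMinkowskiWeight M d c)
    (σ₁ σ₂ : Fin d → Set (J n)) (h₁ : IsFlagChain M d σ₁) (h₂ : IsFlagChain M d σ₂)
    (hpen : ∀ i : Fin d, (i : ℕ) + 2 = d → σ₁ i = σ₂ i)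
    (hmeet : ∀ i : Fin d, (i : ℕ) + 1 = d → (σ₁ i ∩ starSet (σ₂ i)).Nonempty) :
    c σ₁ = c σ₂ :=
  stmt_16_general n M d c hc σ₁ σ₂ h₁ h₂ hpen hmeet
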